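/- Let e be a nonzero idempotent of W(2) (e·e = e, e ≠ 0), and write e = Σ_{k=1}^{8} p_k(e)·e_k in the basis e₁,…,e₈. If p₂(e) = 0, then p₁(e) + 2p₅(e) = −1. -/
import Mathlib

set_option maxHeartbeats 2000000
set_option linter.unusedSectionVars false


noncomputable section

variable (F : Type*) [Field F] [CharZero F]

abbrev V2 (F : Type*) [Field F] : Type _ := Fin 2 → F

abbrev WW (F : Type*) [Field F] : Type _ := V2 F →ₗ[F] V2 F →ₗ[F] V2 F

def vone : V2 F := ![1, 0]

/-- The multiplication on the space of bilinear maps. -/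
def wmul (A B : WW F) : WW F :=
  LinearMap.mk₂ F
    (fun x y => A (vone F) (B x y) - B (A (vone F) x) y - B x (A (vone F) y))
    (fun x x' y => by simp only [map_add, LinearMap.add_apply]; abel)
    (fun c x y => by simp only [map_smul, LinearMap.smul_apply, smul_sub])
    (fun x y y' => by simp only [map_add, LinearMap.add_apply]; abel)
    (fun c x y => by simp only [map_smul, LinearMap.smul_apply, smul_sub])

/-- α_{ij}^k -/
def alphaM (i j k : Fin 2) : WW F :=
  LinearMap.mk₂ F (fun x y => (x i * y j) • (Pi.single k (1 : F) : V2 F))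
    (fun x x' y => by simp [add_mul, add_smul])
    (fun c x y => by simp [smul_smul, mul_assoc])
    (fun x y y' => by simp [mul_add, add_smul])
    (fun c x y => by simp [smul_smul, mul_assoc, mul_left_comm])

/-- The basis e₁, …, e₈ of W(2) (indexed 0,…,7). -/
def bE : Fin 8 → WW F :=
  ![alphaM F 0 0 0 - alphaM F 0 1 1 - alphaM F 1 0 1,
    alphaM F 0 0 1,
    alphaM F 1 1 1 - alphaM F 0 1 0 - alphaM F 1 0 0,
    alphaM F 1 1 0,
    (2 : F) • alphaM F 0 0 0 + alphaM F 0 1 1 + alphaM F 1 0 1,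
    (2 : F) • alphaM F 1 1 1 + alphaM F 0 1 0 + alphaM F 1 0 0,
    alphaM F 0 1 0 - alphaM F 1 0 0,
    alphaM F 0 1 1 - alphaM F 1 0 1]


lemma bE0 : bE F 0 = alphaM F 0 0 0 - alphaM F 0 1 1 - alphaM F 1 0 1 := rfl
lemma bE1 : bE F 1 = alphaM F 0 0 1 := rfl
lemma bE2 : bE F 2 = alphaM F 1 1 1 - alphaM F 0 1 0 - alphaM F 1 0 0 := rfl
lemma bE3 : bE F 3 = alphaM F 1 1 0 := rfl
lemma bE4 : bE F 4 = (2 : F) • alphaM F 0 0 0 + alphaM F 0 1 1 + alphaM F 1 0 1 := rfl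
lemma bE5 : bE F 5 = (2 : F) • alphaM F 1 1 1 + alphaM F 0 1 0 + alphaM F 1 0 0 := rfl
lemma bE6 : bE F 6 = alphaM F 0 1 0 - alphaM F 1 0 0 := rfl
lemma bE7 : bE F 7 = alphaM F 0 1 1 - alphaM F 1 0 1 := rfl

/-- For a nonzero idempotent e = Σ aₖ eₖ of W(2) with p₂(e) = 0 one has
p₁(e) + 2p₅(e) = −1. -/
theorem statement18 (a : Fin 8 → F)
    (hid : wmul F (∑ k, a k • bE F k) (∑ k, a k • bE F k) = ∑ k, a k • bE F k)
    (h0 : (∑ k, a k • bE F k) ≠ 0) (h2 : a 1 = 0) :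
    a 0 + 2 * a 4 = -1 := by
  have h := fun (i j k : Fin 2) =>
    congrFun (congrArg (fun (f : WW F) => f (Pi.single i 1) (Pi.single j 1)) hid) k
  have e000 := h 0 0 0
  have e010 := h 0 1 0
  have e011 := h 0 1 1
  have e100 := h 1 0 0
  have e101 := h 1 0 1
  have e110 := h 1 1 0
  have e111 := h 1 1 1
  simp only [wmul, vone, alphaM, bE0, bE1, bE2, bE3, bE4, bE5, bE6, bE7,
    LinearMap.mk₂_apply, Fin.sum_univ_eight,
    Matrix.cons_val_zero, Matrix.cons_val_one, Matrix.head_cons,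
    LinearMap.add_apply, LinearMap.sub_apply, LinearMap.smul_apply,
    Pi.add_apply, Pi.sub_apply, Pi.smul_apply, Pi.single_apply, smul_eq_mul,
    Fin.isValue, if_true, if_false, one_ne_zero, zero_ne_one, mul_one, mul_zero,
    zero_mul, one_mul, add_zero, zero_add, sub_zero, zero_sub, mul_ite, ite_mul]
    at e000 e010 e011 e100 e101 e110 e111
  have hfac : (a 0 + 2 * a 4) * (a 0 + 2 * a 4 + 1) = 0 := by
    linear_combination -e000 + (a 6 - a 5 + a 2) * h2
  rcases mul_eq_zero.mp hfac with hs | hs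
  · exfalso
    have ha7 : a 7 = 0 := by
      linear_combination (e101 - e011) / 2 - a 7 * hs + a 6 * h2
    have ha4 : a 4 = 0 := by
      linear_combination (-(1:F)/6) * (e101 + e011)
        + ((1:F)/3 - a 4 + (a 0 + 2 * a 4)/3) * hs - ((a 6 + 2*a 5 + a 2)/3) * h2
    have ha0 : a 0 = 0 := by linear_combination hs - 2 * ha4
    have ha6 : a 6 = 0 := by
      linear_combination (e100 - e010) / 2 + (a 5 - a 2) * ha7 - a 6 * ha4 + a 6 * ha0
    have ha5 : a 5 = 0 := by
      linear_combination (-(1:F)/3) * (e010 + e111) + (-(1:F)/3) * ha6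
        + (-(4:F)/3 * a 6 - 2*a 5 + a 2) * ha4 + (a 6/3 + a 5) * ha0
        + (-(2:F)/3 * a 5 - a 2/3) * ha7
    have ha2 : a 2 = 0 := by
      linear_combination e010 + ha5 + ha6 + (2*a 6 + 2*a 5 - 2*a 2) * ha4
        + (a 6 + a 5 - a 2) * ha0 + a 3 * h2
    have ha3 : a 3 = 0 := by
      linear_combination -e110 + (-2*a 3) * ha7 + (3*a 6 + 3*a 5 - 3*a 2) * ha2
        + 3 * a 3 * ha0
    apply h0
    simp [Fin.sum_univ_eight, ha0, h2, ha2, ha3, ha4, ha5, ha6, ha7]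
  · linear_combination hs

end
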